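/- Quantum Union Bound: Let ρ be a density matrix on ℂ^d, let ε ≥ 0, and let Λ₁, …, Λ_T be POVM elements on ℂ^d such that tr(Λ_t ρ) ≤ ε for every t ∈ {1,…,T}. For each t set B_t := √(1 − Λ_t) (a Hermitian matrix). If the measurements are applied in sequence to ρ, the probability that all T outcomes are 0 equals tr(B_T ⋯ B_2 B_1 ρ B_1 B_2 ⋯ B_T); this quantity is at least 1 − T·√ε. Equivalently, the probability that at least one of the T sequential measurements yields outcome 1 is at most T·√ε. -/

import Mathlib

/-!
Write `B t = √(1 - Λ t)` and `C k = B (k-1) ⋯ B 0`, so that `σ k = C k ρ (C k)ᴴ`. Since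
`0 ≤ 1 - B t ≤ Λ t`, Cauchy–Schwarz for the form `(X, Y) ↦ tr ((1 - B t) X ρ Yᴴ)` shows that the
`t`-th measurement lowers `re tr (C t ρ)` by at most `√ε · √(tr (Λ t σ t))`, and the losses
`tr (Λ t σ t) = tr (σ t) - tr (σ (t+1))` telescope. Summing, and using Cauchy–Schwarz once more,
`1 - √(tr σ T) ≤ 1 - re tr (C T ρ) ≤ √(T ε) √(1 - tr σ T)`, which forces
`1 - tr σ T ≤ 4Tε / (1 + Tε)² ≤ T √ε` once `T ≥ 2`. For `T = 1` the loss is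
`tr (Λ 0 ρ) ≤ min ε 1 ≤ √ε`.
-/

open Matrix BigOperators ComplexOrder

/-- The square root of a positive semidefinite matrix, as defined in the older Mathlib
(`Matrix.PosSemidef.sqrt`, since removed). -/
noncomputable def Matrix.PosSemidef.sqrt {n 𝕜 : Type*} [Fintype n] [RCLike 𝕜] [DecidableEq n]
    {A : Matrix n n 𝕜} (hA : A.PosSemidef) : Matrix n n 𝕜 :=
  hA.1.eigenvectorUnitary.1 * diagonal ((↑) ∘ (√·) ∘ hA.1.eigenvalues) *
    (star hA.1.eigenvectorUnitary : Matrix n n 𝕜)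

open scoped MatrixOrder

namespace CFC

variable {A : Type*} [PartialOrder A] [Ring A] [StarRing A] [TopologicalSpace A]
  [StarOrderedRing A] [Algebra ℝ A] [ContinuousFunctionalCalculus ℝ A IsSelfAdjoint]
  [NonnegSpectrumClass ℝ A] [IsSemitopologicalRing A] [T2Space A]

theorem sqrt_le_one {a : A} (h0 : 0 ≤ a) (h1 : a ≤ 1) : sqrt a ≤ 1 := by
  rw [sqrt_eq_real_sqrt a h0, cfcₙ_eq_cfc, cfc_le_one_iff Real.sqrt a]
  exact fun x hx ↦ Real.sqrt_le_one.mpr ((le_one_iff a).mp h1 x hx)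

theorem le_sqrt_self {a : A} (h0 : 0 ≤ a) (h1 : a ≤ 1) : a ≤ sqrt a := by
  rw [sqrt_eq_real_sqrt a h0, cfcₙ_eq_cfc]
  nth_rw 1 [← cfc_id' ℝ a]
  rw [cfc_le_iff (fun x ↦ x) Real.sqrt a]
  intro x hx
  have hx0 : 0 ≤ x := spectrum_nonneg_of_nonneg h0 hx
  have hx1 : x ≤ 1 := (le_one_iff a).mp h1 x hx
  exact Real.le_sqrt_of_sq_le (by nlinarith)

end CFC

theorem one_sub_mul_one_add_sq_le {s a : ℝ} (hs0 : 0 ≤ s) (hs1 : s ≤ 1) (ha0 : 0 ≤ a)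
    (ha1 : a ≤ 1) (h : 1 - √s ≤ √a * √(1 - s)) : (1 - s) * (1 + a) ^ 2 ≤ 4 * a := by
  set u := √s
  have hs : s = u ^ 2 := (Real.sq_sqrt hs0).symm
  have hu1 : u ≤ 1 := Real.sqrt_le_one.mpr hs1
  have hsq : (1 - u) ^ 2 ≤ a * (1 - u ^ 2) := by
    rw [← hs, ← Real.sq_sqrt ha0, ← Real.sq_sqrt (sub_nonneg.mpr hs1), ← mul_pow]
    exact pow_le_pow_left₀ (sub_nonneg.mpr hu1) h 2
  have hw : (1 - u) * (1 + a) ≤ 2 * a := by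
    rcases hu1.lt_or_eq with hu1 | hu1
    · nlinarith
    · rw [hu1]; linarith
  rw [hs]
  -- `4a - (1 - u²)(1 + a)² = (2a - w)(2 - w)` for `w = (1 - u)(1 + a)`
  nlinarith [mul_nonneg (sub_nonneg.2 hw) (by nlinarith : (0 : ℝ) ≤ 2 - (1 - u) * (1 + a))]

theorem one_sub_nat_mul_sqrt_le {T : ℕ} (hT : 2 ≤ T) {ε s : ℝ} (hε : 0 ≤ ε) (hs0 : 0 ≤ s)
    (h : 1 - √s ≤ √(T * ε) * √(1 - s)) : 1 - T * √ε ≤ s := by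
  set e := √ε
  have hε : ε = e ^ 2 := (Real.sq_sqrt hε).symm
  have hT : (2 : ℝ) ≤ T := by exact_mod_cast hT
  rcases le_or_gt 1 (T * e) with hTe | hTe
  · linarith
  rcases le_or_gt 1 s with hs1 | hs1
  · linarith [mul_nonneg (Nat.cast_nonneg T) (Real.sqrt_nonneg ε)]
  have hbound := one_sub_mul_one_add_sq_le hs0 hs1.le (by positivity)
    (by nlinarith [Real.sqrt_nonneg ε] : T * ε ≤ 1) h
  have hfour : 4 * e ≤ (1 + T * ε) ^ 2 := by
    rw [hε]
    nlinarith [sq_nonneg (1 - 2 * e), sq_nonneg e, mul_nonneg (sub_nonneg.2 hT) (sq_nonneg e)]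
  have hmul : (1 - s) * (1 + T * ε) ^ 2 ≤ (T * e) * (1 + T * ε) ^ 2 := calc
    (1 - s) * (1 + T * ε) ^ 2 ≤ 4 * (T * ε) := hbound
    _ = (T * e) * (4 * e) := by rw [hε]; ring
    _ ≤ (T * e) * (1 + T * ε) ^ 2 := mul_le_mul_of_nonneg_left hfour (by positivity)
  linarith [le_of_mul_le_mul_right hmul (by positivity)]

namespace Matrix

variable {n 𝕜 : Type*} [Fintype n] [RCLike 𝕜] [DecidableEq n]

theorem PosSemidef.sqrt_eq_cfcSqrt {A : Matrix n n 𝕜} (hA : A.PosSemidef) :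
    hA.sqrt = CFC.sqrt A := by
  rw [CFC.sqrt_eq_real_sqrt A hA.nonneg, cfcₙ_eq_cfc, hA.1.cfc_eq, IsHermitian.cfc,
    Unitary.conjStarAlgAut_apply]
  rfl

theorem trace_mul_nonneg {P Q : Matrix n n 𝕜} (hP : 0 ≤ P) (hQ : 0 ≤ Q) :
    0 ≤ (P * Q).trace := by
  have hconj : 0 ≤ CFC.sqrt P * Q * CFC.sqrt P := by
    simpa [(CFC.sqrt_nonneg P).isSelfAdjoint.star_eq] using
      star_left_conjugate_nonneg hQ (CFC.sqrt P)
  rw [← CFC.sqrt_mul_sqrt_self P hP, Matrix.mul_assoc, trace_mul_comm]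
  simpa only [Matrix.mul_assoc] using hconj.posSemidef.trace_nonneg

theorem re_trace_mul_nonneg {P Q : Matrix n n 𝕜} (hP : 0 ≤ P) (hQ : 0 ≤ Q) :
    0 ≤ RCLike.re (P * Q).trace :=
  (RCLike.nonneg_iff.mp (trace_mul_nonneg hP hQ)).1

theorem re_trace_mul_le_of_le {P P' Q : Matrix n n 𝕜} (hPP' : P ≤ P') (hQ : 0 ≤ Q) :
    RCLike.re (P * Q).trace ≤ RCLike.re (P' * Q).trace := by
  have h := re_trace_mul_nonneg (sub_nonneg.mpr hPP') hQ
  rw [sub_mul, trace_sub, map_sub] at h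
  linarith

theorem re_trace_mul_sq_le {D ρ : Matrix n n 𝕜} (hD : 0 ≤ D) (hρ : 0 ≤ ρ) (C : Matrix n n 𝕜) :
    RCLike.re (D * C * ρ).trace ^ 2 ≤
      RCLike.re (D * ρ).trace * RCLike.re (D * (C * ρ * Cᴴ)).trace := by
  have hsymm : RCLike.re (D * (ρ * Cᴴ)).trace = RCLike.re (D * C * ρ).trace := by
    rw [← RCLike.conj_re (D * C * ρ).trace, ← RCLike.star_def, ← trace_conjTranspose,
      conjTranspose_mul, conjTranspose_mul, hD.posSemidef.1.eq, hρ.posSemidef.1.eq,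
      ← Matrix.mul_assoc ρ, trace_mul_comm (ρ * Cᴴ)]
  have hquad : ∀ x : ℝ, 0 ≤ RCLike.re (D * ρ).trace * (x * x) +
      -2 * RCLike.re (D * C * ρ).trace * x + RCLike.re (D * (C * ρ * Cᴴ)).trace := by
    intro x
    convert re_trace_mul_nonneg hD (star_right_conjugate_nonneg hρ (C - (x : 𝕜) • 1)) using 1
    simp only [star_eq_conjTranspose, conjTranspose_sub, conjTranspose_smul, conjTranspose_one,
      RCLike.star_def, RCLike.conj_ofReal, sub_mul, mul_sub, smul_mul_assoc, mul_smul_comm,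
      Matrix.mul_one, Matrix.one_mul, trace_sub, trace_smul, map_sub, smul_eq_mul,
      RCLike.re_ofReal_mul]
    rw [hsymm]
    simp only [Matrix.mul_assoc]
    ring
  have hdiscrim := discrim_le_zero hquad
  rw [discrim] at hdiscrim
  nlinarith

theorem trace_sqrt_one_sub_mul_mul_sqrt_one_sub {Λ : Matrix n n 𝕜} (hΛ : Λ ≤ 1)
    (σ : Matrix n n 𝕜) :
    (CFC.sqrt (1 - Λ) * σ * CFC.sqrt (1 - Λ)).trace = σ.trace - (Λ * σ).trace := by
  rw [trace_mul_comm, ← Matrix.mul_assoc, CFC.sqrt_mul_sqrt_self _ (sub_nonneg.mpr hΛ), sub_mul,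
    Matrix.one_mul, trace_sub]

theorem re_trace_mul_sub_re_trace_sqrt_one_sub_mul_le {Λ ρ : Matrix n n 𝕜} (hΛ0 : 0 ≤ Λ)
    (hΛ1 : Λ ≤ 1) (hρ : 0 ≤ ρ) (C : Matrix n n 𝕜) :
    RCLike.re (C * ρ).trace - RCLike.re (CFC.sqrt (1 - Λ) * C * ρ).trace ≤
      √(RCLike.re (Λ * ρ).trace) * √(RCLike.re (Λ * (C * ρ * Cᴴ)).trace) := by
  set D := 1 - CFC.sqrt (1 - Λ)
  have hX0 : 0 ≤ 1 - Λ := sub_nonneg.mpr hΛ1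
  have hX1 : 1 - Λ ≤ 1 := sub_le_self 1 hΛ0
  have hD0 : 0 ≤ D := sub_nonneg.mpr (CFC.sqrt_le_one hX0 hX1)
  have hDΛ : D ≤ Λ := sub_le_comm.mpr (CFC.le_sqrt_self hX0 hX1)
  have hσ : 0 ≤ C * ρ * Cᴴ := (hρ.posSemidef.mul_mul_conjTranspose_same C).nonneg
  have hlhs : RCLike.re (C * ρ).trace - RCLike.re (CFC.sqrt (1 - Λ) * C * ρ).trace =
      RCLike.re (D * C * ρ).trace := by
    simp only [D, sub_mul, Matrix.one_mul, trace_sub, map_sub]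
  rw [hlhs, ← Real.sqrt_mul (re_trace_mul_nonneg hΛ0 hρ)]
  refine Real.le_sqrt_of_sq_le ((re_trace_mul_sq_le hD0 hρ C).trans ?_)
  exact mul_le_mul (re_trace_mul_le_of_le hDΛ hρ) (re_trace_mul_le_of_le hDΛ hσ)
    (re_trace_mul_nonneg hD0 hσ) (re_trace_mul_nonneg hΛ0 hρ)

noncomputable def sqrtOneSubProd (Λ : ℕ → Matrix n n 𝕜) : ℕ → Matrix n n 𝕜
  | 0 => 1
  | k + 1 => CFC.sqrt (1 - Λ k) * sqrtOneSubProd Λ k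

theorem sqrtOneSubProd_succ_conj (Λ : ℕ → Matrix n n 𝕜) (ρ : Matrix n n 𝕜) (k : ℕ) :
    sqrtOneSubProd Λ (k + 1) * ρ * (sqrtOneSubProd Λ (k + 1))ᴴ =
      CFC.sqrt (1 - Λ k) * (sqrtOneSubProd Λ k * ρ * (sqrtOneSubProd Λ k)ᴴ) *
        CFC.sqrt (1 - Λ k) := by
  rw [sqrtOneSubProd, conjTranspose_mul, ← star_eq_conjTranspose (CFC.sqrt _),
    (CFC.sqrt_nonneg _).isSelfAdjoint.star_eq]
  simp only [Matrix.mul_assoc]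

theorem re_trace_sqrtOneSubProd_succ_conj {Λ : ℕ → Matrix n n 𝕜} {k : ℕ} (hΛ : Λ k ≤ 1)
    (ρ : Matrix n n 𝕜) :
    RCLike.re (sqrtOneSubProd Λ (k + 1) * ρ * (sqrtOneSubProd Λ (k + 1))ᴴ).trace =
      RCLike.re (sqrtOneSubProd Λ k * ρ * (sqrtOneSubProd Λ k)ᴴ).trace -
        RCLike.re (Λ k * (sqrtOneSubProd Λ k * ρ * (sqrtOneSubProd Λ k)ᴴ)).trace := by
  rw [sqrtOneSubProd_succ_conj, trace_sqrt_one_sub_mul_mul_sqrt_one_sub hΛ, map_sub]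

theorem one_sub_sqrt_re_trace_sqrtOneSubProd_conj_le {T : ℕ} {ρ : Matrix n n 𝕜} (hρ : 0 ≤ ρ)
    (hρtr : ρ.trace = 1) {ε : ℝ} (hε : 0 ≤ ε) {Λ : ℕ → Matrix n n 𝕜} (hΛ0 : ∀ t, 0 ≤ Λ t)
    (hΛ1 : ∀ t, Λ t ≤ 1) (hprob : ∀ t < T, RCLike.re (Λ t * ρ).trace ≤ ε) :
    1 - √(RCLike.re (sqrtOneSubProd Λ T * ρ * (sqrtOneSubProd Λ T)ᴴ).trace) ≤
      √(T * ε) * √(1 - RCLike.re (sqrtOneSubProd Λ T * ρ * (sqrtOneSubProd Λ T)ᴴ).trace) := by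
  set C := sqrtOneSubProd Λ
  set s : ℕ → ℝ := fun k ↦ RCLike.re (C k * ρ * (C k)ᴴ).trace
  set f : ℕ → ℝ := fun k ↦ RCLike.re (C k * ρ).trace
  set Δ : ℕ → ℝ := fun k ↦ RCLike.re (Λ k * (C k * ρ * (C k)ᴴ)).trace
  change 1 - √(s T) ≤ √(T * ε) * √(1 - s T)
  have hΔ : ∀ k, 0 ≤ Δ k := fun k ↦
    re_trace_mul_nonneg (hΛ0 k) (hρ.posSemidef.mul_mul_conjTranspose_same _).nonneg
  have hstep : ∀ t < T, f t - f (t + 1) ≤ √ε * √(Δ t) := fun t ht ↦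
    (re_trace_mul_sub_re_trace_sqrt_one_sub_mul_le (hΛ0 t) (hΛ1 t) hρ (C t)).trans
      (mul_le_mul_of_nonneg_right (Real.sqrt_le_sqrt (hprob t ht)) (Real.sqrt_nonneg _))
  have hfT : f T ≤ √(s T) :=
    Real.le_sqrt_of_sq_le (by simpa [hρtr] using re_trace_mul_sq_le PosSemidef.one.nonneg hρ (C T))
  have hΔsum : ∑ t ∈ Finset.range T, Δ t = 1 - s T := by
    have hΔ_eq : ∀ t, Δ t = s t - s (t + 1) := fun t ↦ by
      have : s (t + 1) = s t - Δ t := re_trace_sqrtOneSubProd_succ_conj (hΛ1 t) ρ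
      linarith
    rw [Finset.sum_congr rfl fun t _ ↦ hΔ_eq t, Finset.sum_range_sub']
    simp [s, C, sqrtOneSubProd, hρtr]
  calc 1 - √(s T) ≤ 1 - f T := by linarith
    _ = ∑ t ∈ Finset.range T, (f t - f (t + 1)) := by
      rw [Finset.sum_range_sub']
      simp [f, C, sqrtOneSubProd, hρtr]
    _ ≤ ∑ t ∈ Finset.range T, √ε * √(Δ t) :=
      Finset.sum_le_sum fun t ht ↦ hstep t (Finset.mem_range.mp ht)
    _ ≤ √(∑ t ∈ Finset.range T, ε) * √(∑ t ∈ Finset.range T, Δ t) :=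
      Real.sum_sqrt_mul_sqrt_le _ (fun _ ↦ hε) hΔ
    _ = √(T * ε) * √(1 - s T) := by rw [Finset.sum_const, Finset.card_range, nsmul_eq_mul, hΔsum]

theorem one_sub_mul_sqrt_le_re_trace_sqrtOneSubProd_conj {T : ℕ} {ρ : Matrix n n 𝕜} (hρ : 0 ≤ ρ)
    (hρtr : ρ.trace = 1) {ε : ℝ} (hε : 0 ≤ ε) {Λ : ℕ → Matrix n n 𝕜} (hΛ0 : ∀ t, 0 ≤ Λ t)
    (hΛ1 : ∀ t, Λ t ≤ 1) (hprob : ∀ t < T, RCLike.re (Λ t * ρ).trace ≤ ε) :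
    1 - T * √ε ≤ RCLike.re (sqrtOneSubProd Λ T * ρ * (sqrtOneSubProd Λ T)ᴴ).trace := by
  have hsT0 : 0 ≤ RCLike.re (sqrtOneSubProd Λ T * ρ * (sqrtOneSubProd Λ T)ᴴ).trace :=
    (RCLike.nonneg_iff.mp (hρ.posSemidef.mul_mul_conjTranspose_same _).trace_nonneg).1
  rcases lt_or_ge T 2 with hT | hT
  · interval_cases T
    · simp [sqrtOneSubProd, hρtr]
    · have hs1 := re_trace_sqrtOneSubProd_succ_conj (hΛ1 0) ρ
      have := hprob 0 one_pos
      simp only [sqrtOneSubProd, Matrix.mul_one, Matrix.one_mul, conjTranspose_one, hρtr,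
        RCLike.one_re] at hs1 hsT0 ⊢
      rw [Nat.cast_one, one_mul]
      rcases le_total ε 1 with hε1 | hε1
      · linarith [Real.le_sqrt_self_iff.mpr hε1]
      · linarith [Real.one_le_sqrt.mpr hε1]
  · exact one_sub_nat_mul_sqrt_le hT hε hsT0
      (one_sub_sqrt_re_trace_sqrtOneSubProd_conj_le hρ hρtr hε hΛ0 hΛ1 hprob)

end Matrix

/-- **Quantum Union Bound.**
Let `ρ` be a density matrix on `ℂ^d` and `Λ 0, …, Λ (T-1)` POVM elements, each
accepting `ρ` with probability at most `ε`.  Let `B t := √(1 - Λ t)` and let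
`σ t` be the (unnormalized) state after applying the first `t` measurements in
sequence, i.e. `σ 0 = ρ` and `σ (t+1) = B t * σ t * B t`.  Then the probability
`tr (σ T)` that all `T` outcomes are `0` is at least `1 - T·√ε`; equivalently,
the probability that at least one measurement yields outcome `1` is at most `T·√ε`. -/
theorem quantum_union_bound {d T : ℕ}
    (ρ : Matrix (Fin d) (Fin d) ℂ)
    (hρ : ρ.PosSemidef) (hρtr : ρ.trace = 1)
    (ε : ℝ) (hε : 0 ≤ ε)
    (Λ : Fin T → Matrix (Fin d) (Fin d) ℂ)
    (hΛ : ∀ t, (Λ t).PosSemidef)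
    (hΛ1 : ∀ t, (1 - Λ t).PosSemidef)
    (hprob : ∀ t, (Λ t * ρ).trace.re ≤ ε)
    (σ : ℕ → Matrix (Fin d) (Fin d) ℂ)
    (hσ0 : σ 0 = ρ)
    (hσs : ∀ t : Fin T, σ ((t : ℕ) + 1) = (hΛ1 t).sqrt * σ (t : ℕ) * (hΛ1 t).sqrt) :
    1 - (T : ℝ) * Real.sqrt ε ≤ (σ T).trace.re := by
  set Λ' : ℕ → Matrix (Fin d) (Fin d) ℂ := fun t ↦ if h : t < T then Λ ⟨t, h⟩ else 0
  have hΛ'0 : ∀ t, 0 ≤ Λ' t := fun t ↦ by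
    by_cases h : t < T
    · simpa [Λ', h] using (hΛ ⟨t, h⟩).nonneg
    · simp [Λ', h]
  have hΛ'1 : ∀ t, Λ' t ≤ 1 := fun t ↦ by
    by_cases h : t < T
    · simpa [Λ', h] using le_iff.mpr (hΛ1 ⟨t, h⟩)
    · simp [Λ', h]
  have hσC : ∀ t ≤ T, σ t = sqrtOneSubProd Λ' t * ρ * (sqrtOneSubProd Λ' t)ᴴ := by
    intro t
    induction t with
    | zero => simp [hσ0, sqrtOneSubProd]
    | succ t ih =>
      intro ht
      rw [sqrtOneSubProd_succ_conj, ← ih (Nat.le_of_succ_le ht),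
        show Λ' t = Λ ⟨t, ht⟩ from dif_pos ht, ← (hΛ1 ⟨t, ht⟩).sqrt_eq_cfcSqrt]
      exact hσs ⟨t, ht⟩
  rw [hσC T le_rfl]
  exact one_sub_mul_sqrt_le_re_trace_sqrtOneSubProd_conj hρ.nonneg hρtr hε hΛ'0 hΛ'1
    fun t ht ↦ by simpa [Λ', ht] using hprob ⟨t, ht⟩
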